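/- Let g, r, d, s, e be positive integers with d ≤ g − 1, e ≤ g − 1, ρ(g,r,d) < 0, and ρ(g,s,e) = −1. If e − 2s > d − 2r + ⌈2√(−ρ(g,r,d))⌉ − 2 and g + 1 ≤ ⌊d/r⌋ + d, then κ(g,r,d) > κ(g,s,e). -/

import Mathlib

/-!
Write `n = -ρ(g,r,d)`, `m = ⌊√n⌋` and `k = g - d + 2r + 1 - ⌈2√n⌉`. Since
`ρ(g,r-m,d) - mk = m(⌈2√n⌉ - m) - n ≥ m(2√n - m) - n = -(√n - m)² > -1`, taking `ℓ = m`
gives `ρ_k(g,r,d) ≥ 0`, so `κ(g,r,d) ≥ k`; the hypothesis `g + 1 ≤ ⌊d/r⌋ + d` gives `n ≤ r²`,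
which makes `ℓ = m` admissible. On the other side, `ρ(g,r,d) < 0` forces every `k` with
`ρ_k(g,r,d) ≥ 0` to satisfy `k ≤ g - d + 2r - 1`, and the hypothesis on `e - 2s` compares the
two bounds.
-/

noncomputable section

/-- The Brill--Noether number `ρ(g,r,d) = g - (r+1)(g-d+r)`. -/
def rho (g r d : ℤ) : ℤ := g - (r + 1) * (g - d + r)

/-- Pflueger's Brill--Noether number `ρ_k(g,r,d)`, the maximum of
`ρ(g,r-ℓ,d) - ℓk` over integers `0 ≤ ℓ ≤ min r (g-d+r-1)`. -/
def rhoK (g r d k : ℤ) : ℤ :=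
  sSup ((fun ℓ : ℤ => rho g (r - ℓ) d - ℓ * k) '' Set.Icc 0 (min r (g - d + r - 1)))

/-- `κ(g,r,d)`: the greatest integer `k ≥ 1` such that `ρ_k(g,r,d) ≥ 0`. -/
def kappa (g r d : ℤ) : ℤ := sSup {k : ℤ | 1 ≤ k ∧ 0 ≤ rhoK g r d k}

/-- `d_max(g,r) = r + ⌈gr/(r+1)⌉ - 1`, the largest `d` with `ρ(g,r,d) < 0`. -/
def dmax (g r : ℤ) : ℤ := r + ⌈((g : ℚ) * r) / ((r : ℚ) + 1)⌉ - 1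

theorem sq_sub_one_lt_floor_mul_ceil_two_mul_sub_floor {x : ℝ} (hx : 0 ≤ x) :
    x ^ 2 - 1 < ⌊x⌋ * (⌈2 * x⌉ - ⌊x⌋) := by
  have hm : (0 : ℝ) ≤ ⌊x⌋ := Int.cast_nonneg_iff.mpr (Int.floor_nonneg.mpr hx)
  have hfloor_le : (⌊x⌋ : ℝ) ≤ x := Int.floor_le x
  have hlt_floor : x < ⌊x⌋ + 1 := Int.lt_floor_add_one x
  calc x ^ 2 - 1 < x ^ 2 - (x - ⌊x⌋) ^ 2 := by nlinarith
    _ = ⌊x⌋ * (2 * x - ⌊x⌋) := by ring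
    _ ≤ ⌊x⌋ * (⌈2 * x⌉ - ⌊x⌋) := by gcongr; exact Int.le_ceil _

theorem le_floor_sqrt_mul_ceil_two_mul_sqrt_sub {n : ℤ} (hn : 0 ≤ n) :
    n ≤ ⌊√(n : ℝ)⌋ * (⌈2 * √(n : ℝ)⌉ - ⌊√(n : ℝ)⌋) := by
  have h := sq_sub_one_lt_floor_mul_ceil_two_mul_sub_floor (Real.sqrt_nonneg (n : ℝ))
  rw [Real.sq_sqrt (Int.cast_nonneg_iff.mpr hn)] at h
  have : n - 1 < ⌊√(n : ℝ)⌋ * (⌈2 * √(n : ℝ)⌉ - ⌊√(n : ℝ)⌋) := by exact_mod_cast h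
  omega

theorem rho_sub (g r d ℓ : ℤ) :
    rho g (r - ℓ) d = rho g r d + ℓ * (g - d + 2 * r + 1 - ℓ) := by
  unfold rho; ring

theorem neg_rho_le_sq {g r d : ℤ} (hr : 0 < r) (h : g + 1 ≤ d / r + d) :
    -rho g r d ≤ r ^ 2 := by
  have hdiv : r * (d / r) ≤ d := Int.mul_ediv_self_le hr.ne'
  have : r * (g + 1 - d) ≤ r * (d / r) := mul_le_mul_of_nonneg_left (by omega) hr.le
  unfold rho; nlinarith

section BrillNoether

variable {g r d : ℤ}

theorem le_rhoK {k ℓ : ℤ} (hℓ : ℓ ∈ Set.Icc 0 (min r (g - d + r - 1))) :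
    rho g (r - ℓ) d - ℓ * k ≤ rhoK g r d k :=
  le_csSup (((Set.finite_Icc _ _).image _).bddAbove) ⟨ℓ, hℓ, rfl⟩

theorem exists_rhoK_eq (k : ℤ) (h : 0 ≤ min r (g - d + r - 1)) :
    ∃ ℓ ∈ Set.Icc 0 (min r (g - d + r - 1)), rho g (r - ℓ) d - ℓ * k = rhoK g r d k :=
  ((Set.nonempty_Icc.mpr h).image _).csSup_mem ((Set.finite_Icc _ _).image _)

theorem le_of_rhoK_nonneg {k : ℤ} (hr : 0 ≤ r) (hdg : d ≤ g - 1) (hneg : rho g r d < 0)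
    (hk : 0 ≤ rhoK g r d k) : k ≤ g - d + 2 * r - 1 := by
  obtain ⟨ℓ, ⟨hℓ0, -⟩, hℓ⟩ := exists_rhoK_eq k (le_min hr (by omega : 0 ≤ g - d + r - 1))
  rw [← hℓ, rho_sub] at hk
  -- `ρ(g,r,d) < 0` rules out `ℓ = 0`, and then `ℓ ≥ 1` can be cancelled
  have hpos : 0 < ℓ * (g - d + 2 * r + 1 - ℓ - k) := by nlinarith
  have hℓpos : 0 < ℓ := lt_of_le_of_ne hℓ0 (by rintro rfl; simp at hpos)
  have := pos_of_mul_pos_right hpos hℓpos.le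
  omega

theorem kappa_le (hr : 0 ≤ r) (hdg : d ≤ g - 1) (hneg : rho g r d < 0) :
    kappa g r d ≤ g - d + 2 * r - 1 := by
  rcases Set.eq_empty_or_nonempty {k : ℤ | 1 ≤ k ∧ 0 ≤ rhoK g r d k} with hempty | hne
  · rw [kappa, hempty, Int.csSup_empty]; omega
  · exact csSup_le hne fun k hk => le_of_rhoK_nonneg hr hdg hneg hk.2

theorem le_kappa {k ℓ : ℤ} (hr : 0 ≤ r) (hdg : d ≤ g - 1) (hneg : rho g r d < 0) (hk : 1 ≤ k)
    (hℓ0 : 0 ≤ ℓ) (hℓr : ℓ ≤ r) (hℓk : ℓ * k ≤ rho g (r - ℓ) d) : k ≤ kappa g r d := by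
  have hbdd : BddAbove {k : ℤ | 1 ≤ k ∧ 0 ≤ rhoK g r d k} :=
    ⟨g - d + 2 * r - 1, fun k hk => le_of_rhoK_nonneg hr hdg hneg hk.2⟩
  have hρK := le_rhoK (k := k) (⟨hℓ0, le_min hℓr (by omega)⟩ :
    ℓ ∈ Set.Icc 0 (min r (g - d + r - 1)))
  exact le_csSup hbdd ⟨hk, by omega⟩

end BrillNoether

theorem stmt6_general (g r d s e : ℤ) (hr : 1 ≤ r)
    (hs : 1 ≤ s) (hdg : d ≤ g - 1) (heg : e ≤ g - 1)
    (hneg : rho g r d < 0) (hrho2 : rho g s e = -1)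
    (h1 : d - 2 * r + ⌈(2 : ℝ) * Real.sqrt ((-(rho g r d) : ℤ) : ℝ)⌉ - 2 < e - 2 * s)
    (h2 : g + 1 ≤ d / r + d) :
    kappa g s e < kappa g r d := by
  set n := -rho g r d with hn
  set m := ⌊√(n : ℝ)⌋
  have hm0 : 0 ≤ m := Int.floor_nonneg.mpr (Real.sqrt_nonneg _)
  have hmr : m ≤ r := by
    have hsqrt : √(n : ℝ) ≤ r :=
      (Real.sqrt_le_left (by exact_mod_cast hr.trans' zero_le_one)).mpr
        (by exact_mod_cast neg_rho_le_sq (by omega) h2)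
    exact Int.cast_le.mp ((Int.floor_le _).trans hsqrt)
  have hkey := le_floor_sqrt_mul_ceil_two_mul_sqrt_sub (n := n) (by omega)
  have hlow : g - d + 2 * r + 1 - ⌈2 * √(n : ℝ)⌉ ≤ kappa g r d :=
    le_kappa (by omega) hdg hneg (by omega) hm0 hmr (by rw [rho_sub]; linarith)
  have hup : kappa g s e ≤ g - e + 2 * s - 1 := kappa_le (by omega) heg (by omega)
  omega

theorem stmt6 (g r d s e : ℤ) (hg : 1 ≤ g) (hr : 1 ≤ r) (hd : 1 ≤ d)
    (hs : 1 ≤ s) (he : 1 ≤ e) (hdg : d ≤ g - 1) (heg : e ≤ g - 1)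
    (hneg : rho g r d < 0) (hrho2 : rho g s e = -1)
    (h1 : d - 2 * r + ⌈(2 : ℝ) * Real.sqrt ((-(rho g r d) : ℤ) : ℝ)⌉ - 2 < e - 2 * s)
    (h2 : g + 1 ≤ d / r + d) :
    kappa g s e < kappa g r d :=
  stmt6_general g r d s e hr hs hdg heg hneg hrho2 h1 h2
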